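/- Let τ : V → V and σ_R : V × V → V satisfy σ_R(x,y) ∈ N[y] for all x,y ∈ V, and suppose (τ, σ_R) is a winning robber strategy in the turn-based game: for every sequence (x_t)_{t≥0} with x_{t+1} ∈ N[x_t] for all t, the sequence defined by y₀ = τ(x₀) and y_t = σ_R(x_t, y_{t-1}) for t ≥ 1 satisfies x_t ≠ y_{t-1} and x_t ≠ y_t for all t ≥ 1, and x₀ ≠ y₀. Then the robber evades forever in the concurrent game starting from (x̃₀, ỹ₀) with ỹ₀ = τ(x̃₀): for every sequence (x̃_t)_{t≥0} with x̃_{t+1} ∈ N[x̃_t] for all t, the sequence defined by ỹ₁ = ỹ₀ and ỹ_{t+1} = σ_R(x̃_t, ỹ_t) for t ≥ 1 satisfies, for all t ≥ 0: x̃_t ≠ ỹ_t, and it is not the case that both x̃_{t+1} = ỹ_t and ỹ_{t+1} = x̃_t (no 'en passant' capture). -/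

import Mathlib

open Finset Filter

noncomputable section

variable {V : Type*} [Fintype V] [DecidableEq V]

/-- The closed neighborhood `N[u]` of a vertex `u`: `u` together with its neighbors. -/
def nbhd (G : SimpleGraph V) [DecidableRel G.Adj] (u : V) : Finset V :=
  insert u (G.neighborFinset u)

lemma nbhd_nonempty (G : SimpleGraph V) [DecidableRel G.Adj] (u : V) :
    (nbhd G u).Nonempty :=
  ⟨u, Finset.mem_insert_self u _⟩

/-- The robber trajectory generated in the turn-based game by the robber strategy
`(τ, σR)` against cop trajectory `xs`: `y₀ = τ (x₀)` and `y_t = σR (x_t, y_{t-1})`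
for `t ≥ 1`. -/
def robTB (σR : V × V → V) (τ : V → V) (xs : ℕ → V) : ℕ → V
  | 0 => τ (xs 0)
  | (t+1) => σR (xs (t+1), robTB σR τ xs t)

/-- The robber trajectory in the concurrent game: `ỹ₀ = τ (x̃₀)`, `ỹ₁ = ỹ₀`
(the robber stays put in round 1), and `ỹ_{t+1} = σR (x̃_t, ỹ_t)` for `t ≥ 1`. -/
def robCC (σR : V × V → V) (τ : V → V) (xs : ℕ → V) : ℕ → V
  | 0 => τ (xs 0)
  | 1 => τ (xs 0)
  | (t+2) => σR (xs (t+1), robCC σR τ xs (t+1))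

/-!
The concurrent robber replays the turn-based robber one round late: `ỹ_{t+1} = y_t`.
Hence `x̃_t = ỹ_t` would be the turn-based capture `x_t = y_{t-1}` (or `x₀ = y₀`), and a swap
would force `y_t = ỹ_{t+1} = x̃_t`, the turn-based capture `x_t = y_t`.
-/

theorem robCC_succ {V : Type*} (σR : V × V → V) (τ : V → V) (xs : ℕ → V) (t : ℕ) :
    robCC σR τ xs (t + 1) = robTB σR τ xs t := by
  induction t with
  | zero => rfl
  | succ t ih => rw [robCC, ih, robTB]

theorem robber_evades_concurrent_general (G : SimpleGraph V) [DecidableRel G.Adj]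
    (τ : V → V) (σR : V × V → V)
    (hwin : ∀ xs : ℕ → V, (∀ t, xs (t+1) ∈ nbhd G (xs t)) →
      xs 0 ≠ robTB σR τ xs 0 ∧
      ∀ t : ℕ, xs (t+1) ≠ robTB σR τ xs t ∧ xs (t+1) ≠ robTB σR τ xs (t+1)) :
    ∀ xs : ℕ → V, (∀ t, xs (t+1) ∈ nbhd G (xs t)) →
      ∀ t : ℕ, xs t ≠ robCC σR τ xs t ∧
        ¬(xs (t+1) = robCC σR τ xs t ∧ robCC σR τ xs (t+1) = xs t) := by
  intro xs hxs t
  obtain ⟨hstart, hround⟩ := hwin xs hxs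
  have hsame : ∀ t, xs t ≠ robTB σR τ xs t
    | 0 => hstart
    | t + 1 => (hround t).2
  refine ⟨?_, fun hswap => hsame t (robCC_succ σR τ xs t ▸ hswap.2).symm⟩
  cases t with
  | zero => exact hstart
  | succ t => rw [robCC_succ]; exact (hround t).1

/-- if `(τ, σR)` is a winning robber strategy in the turn-based game,
then the derived robber strategy evades forever in the concurrent game: the cop never
occupies the robber's vertex and no \"en passant\" capture (a swap of vertices in one
round) ever occurs. -/
theorem robber_evades_concurrent (G : SimpleGraph V) [DecidableRel G.Adj]
    (hconn : G.Connected) (τ : V → V) (σR : V × V → V)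
    (hσR : ∀ x y : V, σR (x, y) ∈ nbhd G y)
    (hwin : ∀ xs : ℕ → V, (∀ t, xs (t+1) ∈ nbhd G (xs t)) →
      xs 0 ≠ robTB σR τ xs 0 ∧
      ∀ t : ℕ, xs (t+1) ≠ robTB σR τ xs t ∧ xs (t+1) ≠ robTB σR τ xs (t+1)) :
    ∀ xs : ℕ → V, (∀ t, xs (t+1) ∈ nbhd G (xs t)) →
      ∀ t : ℕ, xs t ≠ robCC σR τ xs t ∧
        ¬(xs (t+1) = robCC σR τ xs t ∧ robCC σR τ xs (t+1) = xs t) :=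
  robber_evades_concurrent_general G τ σR hwin
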